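/- The function ρ_ESH is convex on ℝ. -/

import Mathlib

/-!
For `a ≤ b`, the function `huberIcc a b u = max_{σ ∈ [a, b]} (σ u - σ² / 2)` is a supremum of affine
functions of `u`, the maximum being attained at the projection `max a (min b u)` of `u` onto
`[a, b]`; so every point carries an affine minorant touching the graph there, and the function is
convex. `ρ_ESH` is `(1 + ε)⁻² huberIcc c₁ 0 + (1 - ε)⁻² huberIcc 0 c₂`.
-/

noncomputable def rhoESH (ε c₁ c₂ u : ℝ) : ℝ :=
  if u < c₁ then c₁ * u / (1 + ε)^2 - c₁^2 / (2 * (1 + ε)^2)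
  else if u < 0 then u^2 / (2 * (1 + ε)^2)
  else if u ≤ c₂ then u^2 / (2 * (1 - ε)^2)
  else c₂ * u / (1 - ε)^2 - c₂^2 / (2 * (1 - ε)^2)

theorem convexOn_univ_of_forall_add_apply_sub_le {E : Type*} [AddCommGroup E] [Module ℝ E]
    {f : E → ℝ} (g : E → Module.Dual ℝ E) (hg : ∀ x y, f x + g x (y - x) ≤ f y) :
    ConvexOn ℝ Set.univ f := by
  refine ⟨convex_univ, fun x _ y _ a b ha hb hab => ?_⟩
  set z := a • x + b • y
  have hz : a • (x - z) + b • (y - z) = 0 := by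
    rw [smul_sub, smul_sub, sub_add_sub_comm, ← add_smul, hab, one_smul, sub_self]
  have hsum : a * g z (x - z) + b * g z (y - z) = 0 := by
    simpa only [map_add, map_smul, smul_eq_mul, map_zero] using congrArg (g z) hz
  calc f z = a * (f z + g z (x - z)) + b * (f z + g z (y - z)) := by
        linear_combination (-1 : ℝ) * hsum - f z * hab
    _ ≤ a • f x + b • f y := by
        simp only [smul_eq_mul]
        gcongr <;> exact hg z _

noncomputable def huberIcc (a b u : ℝ) : ℝ :=
  max a (min b u) * u - max a (min b u) ^ 2 / 2

theorem mul_sub_sq_div_two_le_huberIcc {a b σ : ℝ} (hσ : σ ∈ Set.Icc a b) (u : ℝ) :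
    σ * u - σ ^ 2 / 2 ≤ huberIcc a b u := by
  obtain ⟨haσ, hσb⟩ := hσ
  set s := max a (min b u) with hs
  have hproj : 0 ≤ (s - σ) * (u - s) := by
    rcases le_total u a with hua | hau
    · rw [hs, max_eq_left ((min_le_right _ _).trans hua)]
      nlinarith
    rcases le_total u b with hub | hbu
    · rw [hs, min_eq_right hub, max_eq_right hau]
      nlinarith
    · rw [hs, min_eq_left hbu, max_eq_right (haσ.trans hσb)]
      nlinarith
  unfold huberIcc
  nlinarith [sq_nonneg (s - σ)]

theorem huberIcc_add_mul_sub_le {a b : ℝ} (hab : a ≤ b) (u v : ℝ) :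
    huberIcc a b u + max a (min b u) * (v - u) ≤ huberIcc a b v := by
  have hs : max a (min b u) ∈ Set.Icc a b := ⟨le_max_left _ _, max_le hab (min_le_left _ _)⟩
  calc huberIcc a b u + max a (min b u) * (v - u)
      = max a (min b u) * v - max a (min b u) ^ 2 / 2 := by unfold huberIcc; ring
    _ ≤ huberIcc a b v := mul_sub_sq_div_two_le_huberIcc hs v

theorem convexOn_huberIcc {a b : ℝ} (hab : a ≤ b) : ConvexOn ℝ Set.univ (huberIcc a b) :=
  convexOn_univ_of_forall_add_apply_sub_le (fun u => max a (min b u) • LinearMap.id)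
    fun u v => by simpa using huberIcc_add_mul_sub_le hab u v

theorem rhoESH_eq_huberIcc (ε : ℝ) {c₁ c₂ : ℝ} (hc₁ : c₁ ≤ 0) (hc₂ : 0 ≤ c₂) :
    rhoESH ε c₁ c₂ = ((1 + ε) ^ 2)⁻¹ • huberIcc c₁ 0 + ((1 - ε) ^ 2)⁻¹ • huberIcc 0 c₂ := by
  funext u
  simp only [Pi.add_apply, Pi.smul_apply, smul_eq_mul, rhoESH, huberIcc, div_eq_mul_inv, mul_inv]
  split_ifs with h₁ h₂ h₃
  · rw [min_eq_right (by linarith), max_eq_left h₁.le, min_eq_right (by linarith),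
      max_eq_left (by linarith)]
    ring
  · rw [min_eq_right h₂.le, max_eq_right (not_lt.mp h₁), min_eq_right (by linarith),
      max_eq_left h₂.le]
    ring
  · rw [min_eq_left (not_lt.mp h₂), max_eq_right hc₁, min_eq_right h₃,
      max_eq_right (not_lt.mp h₂)]
    ring
  · rw [min_eq_left (not_lt.mp h₂), max_eq_right hc₁, min_eq_left (not_le.mp h₃).le,
      max_eq_right hc₂]
    ring

theorem rhoESH_convex_general (ε c₁ c₂ : ℝ) (hc₁ : c₁ < 0) (hc₂ : 0 < c₂) : ConvexOn ℝ Set.univ (rhoESH ε c₁ c₂) := by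
  rw [rhoESH_eq_huberIcc ε hc₁.le hc₂.le]
  exact ((convexOn_huberIcc hc₁.le).smul (by positivity)).add
    ((convexOn_huberIcc hc₂.le).smul (by positivity))

theorem rhoESH_convex (ε c₁ c₂ : ℝ) (hε : ε ∈ Set.Ioo (-1 : ℝ) 1) (hc₁ : c₁ < 0) (hc₂ : 0 < c₂) : ConvexOn ℝ Set.univ (rhoESH ε c₁ c₂) :=
  rhoESH_convex_general ε c₁ c₂ hc₁ hc₂
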